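/- If L is a subset of E with E \ L = A ∪ B for disjoint A, B satisfying r*(E \ L) = r*(A) + r*(B), then for every basis Bs of M, the inequality |Bs ∩ L| ≤ r(L) is implied by the inequalities |Bs ∩ (E \ A)| ≤ r(E \ A), |Bs ∩ (E \ B)| ≤ r(E \ B), and |Bs| = r(E). That is, for any vector x with x(E \ A) ≤ r(E \ A), x(E \ B) ≤ r(E \ B), and x(E) = r(E), with A, B disjoint covering E \ L, we have x(L) ≤ r(L). -/

import Mathlib

open Matroid Set

/-- The rank of a set `X` in a matroid `M`: the largest cardinality of an
independent subset of `X`. -/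
noncomputable def mrank {α : Type*} (M : Matroid α) (X : Set α) : ℕ :=
  sSup {n | ∃ I, M.Indep I ∧ I ⊆ X ∧ I.ncard = n}

/-- A matroid is 2-connected (nonseparable) if its ground set cannot be
partitioned into two nonempty sets whose ranks sum to the rank of the whole. -/
def TwoConnected {α : Type*} (M : Matroid α) : Prop :=
  ¬ ∃ A B : Set α, A.Nonempty ∧ B.Nonempty ∧ Disjoint A B ∧ A ∪ B = M.E ∧
      mrank M A + mrank M B = mrank M M.E

/-- A subset `L` of the ground set is locked in `M` if `M|L` is 2-connected,
`M✶|(E \ L)` is 2-connected, and `min (r L) (r✶ (E \ L)) ≥ 2`. -/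
def Locked {α : Type*} (M : Matroid α) (L : Set α) : Prop :=
  L ⊆ M.E ∧ TwoConnected (M ↾ L) ∧ TwoConnected (M✶ ↾ (M.E \ L)) ∧
    2 ≤ mrank M L ∧ 2 ≤ mrank M✶ (M.E \ L)

/-!
Write `S = E \ A` and `T = E \ B`; since `A` and `B` are disjoint and partition `E \ L`,
`S ∪ T = E` and `S ∩ T = L`. The dual rank formula `r✶(X) = |X| + r(E \ X) - r(E)` turns the
separation `r✶(E \ L) = r✶(A) + r✶(B)` into the modular identity
`r(S) + r(T) = r(E) + r(L)`, while `x(S) + x(T) = x(E) + x(L)` holds for every `x`.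
Subtracting `x(E) = r(E)` from `x(S) + x(T) ≤ r(S) + r(T)` gives `x(L) ≤ r(L)`.
-/

section Rank

variable {α : Type*} {M : Matroid α} {I X A B L : Set α}

lemma mrank_eq_ncard_of_isBasis' (hI : M.IsBasis' I X) (hIfin : I.Finite) :
    mrank M X = I.ncard := by
  refine IsGreatest.csSup_eq ⟨⟨I, hI.indep, hI.subset, rfl⟩, ?_⟩
  rintro n ⟨J, hJ, hJX, rfl⟩
  have hJI : J.encard ≤ I.encard := hI.eRk_eq_encard ▸ hJ.encard_le_eRk_of_subset hJX
  exact ENat.toNat_le_toNat hJI hIfin.encard_lt_top.ne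

lemma cast_mrank_eq_eRk (hX : M.IsRkFinite X) : (mrank M X : ℕ∞) = M.eRk X := by
  obtain ⟨I, hI, hIfin⟩ := hX.exists_finite_isBasis'
  rw [mrank_eq_ncard_of_isBasis' hI hIfin, hIfin.cast_ncard_eq, hI.eRk_eq_encard]

lemma mrank_dual_add_mrank_ground (hE : M.E.Finite) (hX : X ⊆ M.E) :
    mrank M✶ X + mrank M M.E = mrank M (M.E \ X) + X.ncard := by
  apply Nat.cast_injective (R := ℕ∞)
  push_cast
  rw [cast_mrank_eq_eRk (M✶.isRkFinite_of_finite (hE.subset hX)),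
    cast_mrank_eq_eRk (M.isRkFinite_of_finite hE),
    cast_mrank_eq_eRk (M.isRkFinite_of_finite (hE.subset sdiff_subset)),
    (hE.subset hX).cast_ncard_eq, eRk_ground]
  exact M.eRk_dual_add_eRank X hX

lemma mrank_diff_add_mrank_diff_of_dual_separation (hE : M.E.Finite) (hL : L ⊆ M.E)
    (hAB : Disjoint A B) (hunion : A ∪ B = M.E \ L)
    (hsep : mrank M✶ (M.E \ L) = mrank M✶ A + mrank M✶ B) :
    mrank M (M.E \ A) + mrank M (M.E \ B) = mrank M L + mrank M M.E := by
  have hAE : A ⊆ M.E := subset_union_left.trans (hunion.subset.trans sdiff_subset)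
  have hBE : B ⊆ M.E := subset_union_right.trans (hunion.subset.trans sdiff_subset)
  have hL' := mrank_dual_add_mrank_ground hE (sdiff_subset : M.E \ L ⊆ M.E)
  rw [sdiff_sdiff_cancel_left hL] at hL'
  have hA' := mrank_dual_add_mrank_ground hE hAE
  have hB' := mrank_dual_add_mrank_ground hE hBE
  have hcard : A.ncard + B.ncard = (M.E \ L).ncard := by
    rw [← hunion, ncard_union_eq hAB (hE.subset hAE) (hE.subset hBE)]
  omega

end Rank

lemma finsum_mem_diff_add_finsum_mem_diff {α β : Type*} [AddCommMonoid β] {f : α → β}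
    {E A B : Set α} (hE : E.Finite) (hAB : Disjoint A B) :
    ∑ᶠ e ∈ E \ A, f e + ∑ᶠ e ∈ E \ B, f e = ∑ᶠ e ∈ E, f e + ∑ᶠ e ∈ E \ (A ∪ B), f e := by
  rw [← finsum_mem_union_inter hE.sdiff hE.sdiff, ← sdiff_inter, hAB.inter_eq, sdiff_empty,
    sdiff_inter_sdiff]

theorem stmt4_general {α : Type*} (M : Matroid α) (hfin : M.E.Finite) (L : Set α) (hL : L ⊆ M.E)
    (A B : Set α) (hdisj : Disjoint A B)
    (hunion : A ∪ B = M.E \ L)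
    (hsep : mrank M✶ (M.E \ L) = mrank M✶ A + mrank M✶ B)
    (x : α → ℝ)
    (hxA : ∑ᶠ e ∈ M.E \ A, x e ≤ (mrank M (M.E \ A) : ℝ))
    (hxB : ∑ᶠ e ∈ M.E \ B, x e ≤ (mrank M (M.E \ B) : ℝ))
    (hxE : ∑ᶠ e ∈ M.E, x e = (mrank M M.E : ℝ)) :
    ∑ᶠ e ∈ L, x e ≤ (mrank M L : ℝ) := by
  have hsum := finsum_mem_diff_add_finsum_mem_diff (f := x) hfin hdisj
  rw [hunion, sdiff_sdiff_cancel_left hL] at hsum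
  have hrank : (mrank M (M.E \ A) : ℝ) + mrank M (M.E \ B) = mrank M L + mrank M M.E := by
    exact_mod_cast mrank_diff_add_mrank_diff_of_dual_separation hfin hL hdisj hunion hsep
  linarith

theorem stmt4 {α : Type*} (M : Matroid α) (hfin : M.E.Finite) (L : Set α) (hL : L ⊆ M.E)
    (A B : Set α) (hA : A.Nonempty) (hB : B.Nonempty) (hdisj : Disjoint A B)
    (hunion : A ∪ B = M.E \ L)
    (hsep : mrank M✶ (M.E \ L) = mrank M✶ A + mrank M✶ B)
    (x : α → ℝ)
    (hxA : ∑ᶠ e ∈ M.E \ A, x e ≤ (mrank M (M.E \ A) : ℝ))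
    (hxB : ∑ᶠ e ∈ M.E \ B, x e ≤ (mrank M (M.E \ B) : ℝ))
    (hxE : ∑ᶠ e ∈ M.E, x e = (mrank M M.E : ℝ)) :
    ∑ᶠ e ∈ L, x e ≤ (mrank M L : ℝ) :=
  stmt4_general M hfin L hL A B hdisj hunion hsep x hxA hxB hxE
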